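/- Let S ⊂ {0,1}^n be a proper nonempty subset, and define the directed graph G(S) on vertex set {0,1}^n with edge multiset E(S) = { (f_{≤i-1}(x), f_{≤i}(x)), (f_{≥i}(x), f_{≥i+1}(x)) : x ∈ S, f_i(x) ∉ S }. Then every vertex of G(S) has equal in-degree and out-degree (counted with multiplicity). -/
import Mathlib


open Matrix

/-- Flip the `i`-th coordinate of `x`. -/
def flipAt {n : ℕ} (i : Fin n) (x : Fin n → Bool) : Fin n → Bool :=
  Function.update x i (!x i)

/-- Flip the first `k` coordinates of `x` (1-indexed coordinates `1..k`). -/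
def fle {n : ℕ} (k : ℕ) (x : Fin n → Bool) : Fin n → Bool :=
  fun j => if j.val < k then !x j else x j

/-- Flip coordinates `k..n` (1-indexed) of `x`; `fge (n+1) x = x`. -/
def fge {n : ℕ} (k : ℕ) (x : Fin n → Bool) : Fin n → Bool :=
  fun j => if k ≤ j.val + 1 then !x j else x j

/-- Modified Metropolis flip probability at site `i`. -/
noncomputable def flipMod {n : ℕ} (p : (Fin n → Bool) → ℝ) (i : Fin n)
    (x : Fin n → Bool) : ℝ :=
  if p x < p (flipAt i x) then 1
  else if p (flipAt i x) < p x then p (flipAt i x) / p x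
  else 1 / 2

/-- Standard Metropolis flip probability at site `i`. -/
noncomputable def flipStd {n : ℕ} (p : (Fin n → Bool) → ℝ) (i : Fin n)
    (x : Fin n → Bool) : ℝ :=
  min 1 (p (flipAt i x) / p x)

/-- Single-site transition matrix of the modified Metropolis operator. -/
noncomputable def Tmod {n : ℕ} (p : (Fin n → Bool) → ℝ) (i : Fin n) :
    Matrix (Fin n → Bool) (Fin n → Bool) ℝ :=
  fun x y =>
    if y = flipAt i x then flipMod p i x
    else if y = x then 1 - flipMod p i x
    else 0

/-- Single-site transition matrix of the standard Metropolis operator. -/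
noncomputable def Tstd {n : ℕ} (p : (Fin n → Bool) → ℝ) (i : Fin n) :
    Matrix (Fin n → Bool) (Fin n → Bool) ℝ :=
  fun x y =>
    if y = flipAt i x then flipStd p i x
    else if y = x then 1 - flipStd p i x
    else 0

/-- Full sweep `T = T_n ∘ ⋯ ∘ T_1` (apply `T_1` first) of the modified operators. -/
noncomputable def sweep {n : ℕ} (p : (Fin n → Bool) → ℝ) :
    Matrix (Fin n → Bool) (Fin n → Bool) ℝ :=
  (List.ofFn (fun i : Fin n => Tmod p i)).prod

/-- Full sweep of the standard Metropolis operators. -/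
noncomputable def sweepStd {n : ℕ} (p : (Fin n → Bool) → ℝ) :
    Matrix (Fin n → Bool) (Fin n → Bool) ℝ :=
  (List.ofFn (fun i : Fin n => Tstd p i)).prod

/-- Edge multiset of the graph `G(S)`: each pair `(x, i)` with `x ∈ S` and
`f_i(x) ∉ S` contributes the two directed edges of the construction. -/
def edgeMul {n : ℕ} (S : Finset (Fin n → Bool)) :
    Multiset ((Fin n → Bool) × (Fin n → Bool)) :=
  (Finset.univ.filter
      (fun q : (Fin n → Bool) × Fin n => q.1 ∈ S ∧ flipAt q.2 q.1 ∉ S)).val.bind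
    (fun q =>
      {(fle q.2.val q.1, fle (q.2.val + 1) q.1),
       (fge (q.2.val + 1) q.1, fge (q.2.val + 2) q.1)})


section AuxStmt12

open Finset

lemma flipAt_apply {n : ℕ} (i : Fin n) (x : Fin n → Bool) (j : Fin n) :
    flipAt i x j = if j = i then !x i else x j := by
  simp [flipAt, Function.update_apply]

lemma fle_invol {n : ℕ} (k : ℕ) (v : Fin n → Bool) : fle k (fle k v) = v := by
  funext j; simp only [fle]; split <;> simp

lemma fge_invol {n : ℕ} (k : ℕ) (v : Fin n → Bool) : fge k (fge k v) = v := by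
  funext j; simp only [fge]; split <;> simp

lemma flipAt_invol {n : ℕ} (i : Fin n) (v : Fin n → Bool) : flipAt i (flipAt i v) = v := by
  funext j; simp [flipAt_apply]; split <;> simp_all

lemma fle_eq_iff {n : ℕ} (k : ℕ) (x v : Fin n → Bool) : fle k x = v ↔ x = fle k v :=
  ⟨fun h => by rw [← h, fle_invol], fun h => by rw [h, fle_invol]⟩

lemma fge_eq_iff {n : ℕ} (k : ℕ) (x v : Fin n → Bool) : fge k x = v ↔ x = fge k v :=
  ⟨fun h => by rw [← h, fge_invol], fun h => by rw [h, fge_invol]⟩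

lemma flipAt_fle {n : ℕ} (i : Fin n) (v : Fin n → Bool) :
    flipAt i (fle i.val v) = fle (i.val + 1) v := by
  funext j
  rw [flipAt_apply]
  rcases eq_or_ne j i with h | h
  · subst h; simp [fle]
  · have hji : j.val ≠ i.val := fun hv => h (Fin.ext hv)
    simp only [fle, if_neg h]
    rcases lt_or_ge j.val i.val with h2 | h2
    · rw [if_pos h2, if_pos (by omega)]
    · rw [if_neg (by omega), if_neg (by omega)]

lemma flipAt_fge {n : ℕ} (i : Fin n) (v : Fin n → Bool) :
    flipAt i (fge (i.val + 1) v) = fge (i.val + 2) v := by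
  funext j
  rw [flipAt_apply]
  rcases eq_or_ne j i with h | h
  · subst h; simp [fge]
  · have hji : j.val ≠ i.val := fun hv => h (Fin.ext hv)
    simp only [fge, if_neg h]
    rcases lt_or_ge j.val i.val with h2 | h2
    · rw [if_neg (by omega), if_neg (by omega)]
    · rw [if_pos (by omega), if_pos (by omega)]

lemma flipAt_fle' {n : ℕ} (i : Fin n) (v : Fin n → Bool) :
    flipAt i (fle (i.val + 1) v) = fle i.val v := by
  rw [← flipAt_fle, flipAt_invol]

lemma flipAt_fge' {n : ℕ} (i : Fin n) (v : Fin n → Bool) :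
    flipAt i (fge (i.val + 2) v) = fge (i.val + 1) v := by
  rw [← flipAt_fge, flipAt_invol]

lemma fle_zero' {n : ℕ} (v : Fin n → Bool) : fle 0 v = v := by funext j; simp [fle]
lemma fge_top {n : ℕ} (v : Fin n → Bool) : fge (n + 1) v = v := by
  funext j; simp only [fge]; rw [if_neg (by omega)]
lemma fle_n_eq_fge_one {n : ℕ} (v : Fin n → Bool) : fle n v = fge 1 v := by
  funext j; simp only [fle, fge]; rw [if_pos j.isLt, if_pos (by omega)]

lemma card_filter_bind {α β : Type*} (s : Multiset α) (f : α → Multiset β)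
    (p : β → Prop) [DecidablePred p] :
    (Multiset.card ((s.bind f).filter p)) =
      (s.map (fun a => Multiset.card ((f a).filter p))).sum := by
  induction s using Multiset.induction_on with
  | empty => simp
  | cons a s ih => simp [Multiset.filter_add, ih]

lemma card_filter_pair {β : Type*} (p : β → Prop) [DecidablePred p] (a b : β) :
    Multiset.card (Multiset.filter p {a, b}) =
      (if p a then 1 else 0) + (if p b then 1 else 0) := by
  by_cases ha : p a <;> by_cases hb : p b <;>
    simp [Multiset.insert_eq_cons, Multiset.filter_cons, Multiset.filter_singleton, ha, hb]

lemma key_cyc (c : ℕ → Bool) (m : ℕ) (h : c 0 = c m) :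
    (∑ k ∈ Finset.range m, if c k = true ∧ c (k+1) = false then (1:ℕ) else 0) =
    ∑ k ∈ Finset.range m, if c k = false ∧ c (k+1) = true then (1:ℕ) else 0 := by
  have hZ : ∀ k, ((if c k = true ∧ c (k+1) = false then (1:ℤ) else 0) -
      (if c k = false ∧ c (k+1) = true then (1:ℤ) else 0)) =
      (if c k then (1:ℤ) else 0) - (if c (k+1) then 1 else 0) := by
    intro k; cases h1 : c k <;> cases h2 : c (k+1) <;> simp [h1, h2]
  have htel := Finset.sum_range_sub' (fun k => if c k then (1:ℤ) else 0) m
  have hsum : (∑ k ∈ Finset.range m, ((if c k = true ∧ c (k+1) = false then (1:ℤ) else 0) -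
      (if c k = false ∧ c (k+1) = true then (1:ℤ) else 0))) = 0 := by
    simp_rw [hZ]; rw [htel, h]; ring
  rw [Finset.sum_sub_distrib, sub_eq_zero] at hsum
  have hcast : ((∑ k ∈ Finset.range m, if c k = true ∧ c (k+1) = false then (1:ℕ) else 0 : ℕ) : ℤ) =
      ((∑ k ∈ Finset.range m, if c k = false ∧ c (k+1) = true then (1:ℕ) else 0 : ℕ) : ℤ) := by
    push_cast
    exact hsum
  exact_mod_cast hcast

lemma card_filter_edgeMul {n : ℕ} (S : Finset (Fin n → Bool))
    (p : (Fin n → Bool) × (Fin n → Bool) → Prop) [DecidablePred p] :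
    Multiset.card ((edgeMul S).filter p) =
      ∑ i : Fin n, ∑ x : Fin n → Bool,
        if x ∈ S ∧ flipAt i x ∉ S then
          ((if p (fle i.val x, fle (i.val+1) x) then 1 else 0) +
           (if p (fge (i.val+1) x, fge (i.val+2) x) then 1 else 0)) else 0 := by
  rw [edgeMul, card_filter_bind]
  have h1 : ((Finset.univ.filter
        (fun q : (Fin n → Bool) × Fin n => q.1 ∈ S ∧ flipAt q.2 q.1 ∉ S)).val.map
      (fun q => Multiset.card (Multiset.filter p
        {(fle q.2.val q.1, fle (q.2.val + 1) q.1),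
         (fge (q.2.val + 1) q.1, fge (q.2.val + 2) q.1)}))).sum
      = ∑ q ∈ Finset.univ.filter
          (fun q : (Fin n → Bool) × Fin n => q.1 ∈ S ∧ flipAt q.2 q.1 ∉ S),
          Multiset.card (Multiset.filter p
            {(fle q.2.val q.1, fle (q.2.val + 1) q.1),
             (fge (q.2.val + 1) q.1, fge (q.2.val + 2) q.1)}) := rfl
  rw [h1]
  simp_rw [card_filter_pair]
  rw [Finset.sum_filter, Fintype.sum_prod_type, Finset.sum_comm]

lemma inner_sum_out {n : ℕ} (S : Finset (Fin n → Bool)) (v : Fin n → Bool) (i : Fin n) :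
    (∑ x : Fin n → Bool, if x ∈ S ∧ flipAt i x ∉ S then
        ((if fle i.val x = v then 1 else 0) + (if fge (i.val+1) x = v then 1 else 0)) else 0)
    = ((if fle i.val v ∈ S ∧ fle (i.val+1) v ∉ S then 1 else 0) +
       (if fge (i.val+1) v ∈ S ∧ fge (i.val+2) v ∉ S then 1 else 0)) := by
  classical
  have hx : ∀ x : Fin n → Bool,
      (if x ∈ S ∧ flipAt i x ∉ S then
        ((if fle i.val x = v then 1 else 0) + (if fge (i.val+1) x = v then 1 else 0)) else 0)
      = ((if x = fle i.val v then (if x ∈ S ∧ flipAt i x ∉ S then 1 else 0) else 0) +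
         (if x = fge (i.val+1) v then (if x ∈ S ∧ flipAt i x ∉ S then 1 else 0) else 0)) := by
    intro x
    simp only [fle_eq_iff, fge_eq_iff]
    split_ifs <;> simp_all
  rw [Finset.sum_congr rfl (fun x _ => hx x), Finset.sum_add_distrib,
    Finset.sum_ite_eq' Finset.univ (fle i.val v), Finset.sum_ite_eq' Finset.univ (fge (i.val+1) v)]
  simp [flipAt_fle, flipAt_fge]

lemma inner_sum_in {n : ℕ} (S : Finset (Fin n → Bool)) (v : Fin n → Bool) (i : Fin n) :
    (∑ x : Fin n → Bool, if x ∈ S ∧ flipAt i x ∉ S then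
        ((if fle (i.val+1) x = v then 1 else 0) + (if fge (i.val+2) x = v then 1 else 0)) else 0)
    = ((if fle (i.val+1) v ∈ S ∧ fle i.val v ∉ S then 1 else 0) +
       (if fge (i.val+2) v ∈ S ∧ fge (i.val+1) v ∉ S then 1 else 0)) := by
  classical
  have hx : ∀ x : Fin n → Bool,
      (if x ∈ S ∧ flipAt i x ∉ S then
        ((if fle (i.val+1) x = v then 1 else 0) + (if fge (i.val+2) x = v then 1 else 0)) else 0)
      = ((if x = fle (i.val+1) v then (if x ∈ S ∧ flipAt i x ∉ S then 1 else 0) else 0) +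
         (if x = fge (i.val+2) v then (if x ∈ S ∧ flipAt i x ∉ S then 1 else 0) else 0)) := by
    intro x
    simp only [fle_eq_iff, fge_eq_iff]
    split_ifs <;> simp_all
  rw [Finset.sum_congr rfl (fun x _ => hx x), Finset.sum_add_distrib,
    Finset.sum_ite_eq' Finset.univ (fle (i.val+1) v),
    Finset.sum_ite_eq' Finset.univ (fge (i.val+2) v)]
  simp [flipAt_fle', flipAt_fge']

end AuxStmt12

/-- In `G(S)` every vertex has equal in-degree and out-degree
(counted with multiplicity). -/
theorem stmt12 {n : ℕ} (S : Finset (Fin n → Bool)) (h1 : S.Nonempty)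
    (h2 : S ≠ Finset.univ) (v : Fin n → Bool) :
    ((edgeMul S).filter (fun e => e.1 = v)).card =
      ((edgeMul S).filter (fun e => e.2 = v)).card := by
    classical
  set c : ℕ → Bool := fun k =>
    if k ≤ n then decide (fle k v ∈ S) else decide (fge (k - n + 1) v ∈ S) with hc
  have hc1 : ∀ k, k ≤ n → c k = decide (fle k v ∈ S) := by
    intro k hk; simp [hc, hk]
  have hc2 : ∀ t, c (n + t) = decide (fge (t + 1) v ∈ S) := by
    intro t
    rcases Nat.eq_zero_or_pos t with ht | ht
    · subst ht
      simp only [Nat.add_zero]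
      rw [hc1 n le_rfl, fle_n_eq_fge_one]
    · simp only [hc]
      rw [if_neg (by omega)]
      have h3 : n + t - n + 1 = t + 1 := by omega
      rw [h3]
  have hc0 : c 0 = c (n + n) := by
    rw [hc1 0 (Nat.zero_le _), hc2 n, fle_zero', fge_top]
  have hout : Multiset.card ((edgeMul S).filter (fun e => e.1 = v)) =
      ∑ k ∈ Finset.range (n + n), (if c k = true ∧ c (k+1) = false then (1:ℕ) else 0) := by
    rw [card_filter_edgeMul]
    simp only [inner_sum_out S v]
    rw [Finset.sum_range_add]
    have e1 : (∑ i : Fin n, ((if fle i.val v ∈ S ∧ fle (i.val+1) v ∉ S then (1:ℕ) else 0) +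
        (if fge (i.val+1) v ∈ S ∧ fge (i.val+2) v ∉ S then 1 else 0))) =
        ∑ k ∈ Finset.range n, ((if fle k v ∈ S ∧ fle (k+1) v ∉ S then (1:ℕ) else 0) +
        (if fge (k+1) v ∈ S ∧ fge (k+2) v ∉ S then 1 else 0)) :=
      Fin.sum_univ_eq_sum_range (fun k => (if fle k v ∈ S ∧ fle (k+1) v ∉ S then (1:ℕ) else 0) +
        (if fge (k+1) v ∈ S ∧ fge (k+2) v ∉ S then 1 else 0)) n
    rw [e1, Finset.sum_add_distrib]
    congr 1
    · apply Finset.sum_congr rfl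
      intro k hk
      have hk' : k < n := Finset.mem_range.mp hk
      rw [hc1 k (by omega), hc1 (k+1) (by omega)]
      simp only [decide_eq_true_eq, decide_eq_false_iff_not]
    · apply Finset.sum_congr rfl
      intro k hk
      have h2 : n + k + 1 = n + (k + 1) := by omega
      rw [hc2 k, h2, hc2 (k+1)]
      simp only [decide_eq_true_eq, decide_eq_false_iff_not]
  have hin : Multiset.card ((edgeMul S).filter (fun e => e.2 = v)) =
      ∑ k ∈ Finset.range (n + n), (if c k = false ∧ c (k+1) = true then (1:ℕ) else 0) := by
    rw [card_filter_edgeMul]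
    simp only [inner_sum_in S v]
    rw [Finset.sum_range_add]
    have e1 : (∑ i : Fin n, ((if fle (i.val+1) v ∈ S ∧ fle i.val v ∉ S then (1:ℕ) else 0) +
        (if fge (i.val+2) v ∈ S ∧ fge (i.val+1) v ∉ S then 1 else 0))) =
        ∑ k ∈ Finset.range n, ((if fle (k+1) v ∈ S ∧ fle k v ∉ S then (1:ℕ) else 0) +
        (if fge (k+2) v ∈ S ∧ fge (k+1) v ∉ S then 1 else 0)) :=
      Fin.sum_univ_eq_sum_range (fun k => (if fle (k+1) v ∈ S ∧ fle k v ∉ S then (1:ℕ) else 0) +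
        (if fge (k+2) v ∈ S ∧ fge (k+1) v ∉ S then 1 else 0)) n
    rw [e1, Finset.sum_add_distrib]
    congr 1
    · apply Finset.sum_congr rfl
      intro k hk
      have hk' : k < n := Finset.mem_range.mp hk
      rw [hc1 k (by omega), hc1 (k+1) (by omega)]
      simp only [decide_eq_true_eq, decide_eq_false_iff_not, and_comm]
    · apply Finset.sum_congr rfl
      intro k hk
      have h2 : n + k + 1 = n + (k + 1) := by omega
      rw [hc2 k, h2, hc2 (k+1)]
      simp only [decide_eq_true_eq, decide_eq_false_iff_not, and_comm]
  rw [hout, hin]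
  exact key_cyc c (n + n) hc0
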